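/- In M, for all natural numbers n, k with 0 < n < k, the equality y·xⁿyᵏ = x^{n−1}yᵏ holds. -/

import Mathlib

/-- The formal inverse of a word over `{x, y}` (with `x = true`, `y = false`):
reverse the word and interchange the two letters. -/
def winv (w : FreeMonoid Bool) : FreeMonoid Bool :=
  FreeMonoid.ofList ((FreeMonoid.toList w).reverse.map Bool.not)

/-- The defining relations of the free monogenic inverse monoid. -/
inductive FIMRel1 : FreeMonoid Bool → FreeMonoid Bool → Prop
  | idem (w : FreeMonoid Bool) : FIMRel1 (w * winv w * w) w
  | comm (w z : FreeMonoid Bool) :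
      FIMRel1 (w * winv w * (z * winv z)) (z * winv z * (w * winv w))

/-- The free monogenic inverse monoid. -/
abbrev FIM1 := (conGen FIMRel1).Quotient

/-- The generator `x` of the free monogenic inverse monoid. -/
def mx : FIM1 := (conGen FIMRel1).mk' (FreeMonoid.of true)

/-- The (generalized) inverse `y` of the generator. -/
def my : FIM1 := (conGen FIMRel1).mk' (FreeMonoid.of false)

lemma winv_of (b : Bool) : winv (FreeMonoid.of b) = FreeMonoid.of (!b) := rfl

lemma winv_mul (u v : FreeMonoid Bool) : winv (u * v) = winv v * winv u := by
  simp [winv, FreeMonoid.toList_mul]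

lemma winv_pow_of (b : Bool) (m : ℕ) :
    winv ((FreeMonoid.of b) ^ m) = (FreeMonoid.of (!b)) ^ m := by
  induction m with
  | zero => rfl
  | succ m ih => rw [pow_succ, winv_mul, ih, winv_of, pow_succ']

lemma fim_eq {a b : FreeMonoid Bool} (h : FIMRel1 a b) :
    (conGen FIMRel1).mk' a = (conGen FIMRel1).mk' b := by
  exact (Con.eq _).mpr (ConGen.Rel.of _ _ h)

lemma h1 : my * mx * my = my := by
  have := fim_eq (FIMRel1.idem (FreeMonoid.of false))
  simpa [winv_of, mx, my] using this

lemma h1' (t : FIM1) : my * (mx * (my * t)) = my * t := by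
  have := congrArg (· * t) h1
  simpa [mul_assoc] using this

lemma h2 (m : ℕ) :
    my * mx * (mx ^ m * my ^ m) = mx ^ m * my ^ m * (my * mx) := by
  have := fim_eq (FIMRel1.comm (FreeMonoid.of false) ((FreeMonoid.of true) ^ m))
  have hp : ∀ a : FreeMonoid Bool, ((a ^ m : FreeMonoid Bool) : (conGen FIMRel1).Quotient) =
      (a : (conGen FIMRel1).Quotient) ^ m := fun a => rfl
  simpa [winv_of, winv_pow_of, mx, my, map_pow, hp] using this

lemma h2' (m : ℕ) (t : FIM1) :
    my * (mx * (mx ^ m * (my ^ m * t))) = mx ^ m * (my ^ m * (my * (mx * t))) := by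
  have := congrArg (· * t) (h2 m)
  simpa [mul_assoc] using this

/-- For `0 < n < k`: `y·xⁿyᵏ = x^{n−1}yᵏ` in `M`. -/
theorem rel_three (n k : ℕ) (hn : 0 < n) (hk : n < k) :
    my * (mx ^ n * my ^ k) = mx ^ (n - 1) * my ^ k := by
  obtain ⟨m, rfl⟩ : ∃ m, n = m + 1 := ⟨n - 1, (Nat.succ_pred_eq_of_pos hn).symm⟩
  obtain ⟨j, rfl⟩ : ∃ j, k = m + j + 2 := ⟨k - m - 2, by omega⟩
  have expand : my ^ (m + j + 2) = my ^ m * (my * my ^ (j + 1)) := by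
    rw [show m + j + 2 = m + (j + 2) by ring, pow_add, pow_succ']
  rw [expand, pow_succ', Nat.add_sub_cancel]
  simp only [mul_assoc]
  rw [h2', h1']
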